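/- Let F = (f_1,…,f_{2n+1}) : U → U' be a C² conformal diffeomorphism between open connected subsets of ℍⁿ with contact factor λ_F, and G = F⁻¹ = (g_1,…,g_{2n+1}). Then for all 1 ≤ k,ℓ ≤ n, on U: (Ỹ_ℓ g_k) ∘ F = −X_{n+k}( f_ℓ · λ_F^{-1} ) and (Ỹ_ℓ g_{n+k}) ∘ F = X_k( f_ℓ · λ_F^{-1} ). That is, ψ = −f_ℓ·λ_F^{-1} satisfies (Ỹ_ℓ g_k) ∘ F = X_{n+k}ψ and (Ỹ_ℓ g_{n+k}) ∘ F = −X_kψ. -/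

import Mathlib

/-!
Put `a = DG(F p) Ỹ_ℓ(F p)`, so that `(Ỹ_ℓ g_i)(F p) = a_i` and `DF(p) a = Ỹ_ℓ(F p)`. Taking the
exterior derivative of `F^*α = λ α` gives `F^*dα = dλ ∧ α + λ dα`; evaluate it on `(a, u)` with `u`
horizontal. Since `dα(Ỹ_ℓ, ·) = -4 dx_ℓ` and `α(a) = 4 f_ℓ / λ` (because `α(Ỹ_ℓ) = 4 x_ℓ`), this
says `dα(a, u) = -4 u(f_ℓ / λ)`; the choices `u = X_k` and `u = Y_k` read off the `y_k`- and
`x_k`-components of `a`.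
-/

open Set Matrix MeasureTheory

noncomputable section

/-- The underlying space of the `n`-th Heisenberg group: `ℝ^(2n+1)` with coordinates
`(x_1,…,x_n,y_1,…,y_n,t)`. -/
abbrev Heis (n : ℕ) := Fin (2*n+1) → ℝ

/-- Index of the coordinate `x_j`. -/
def xIdx {n : ℕ} (j : Fin n) : Fin (2*n+1) := ⟨j.1, by have := j.2; omega⟩

/-- Index of the coordinate `y_j`. -/
def yIdx {n : ℕ} (j : Fin n) : Fin (2*n+1) := ⟨n + j.1, by have := j.2; omega⟩

/-- Index of the coordinate `t`. -/
def tIdx {n : ℕ} : Fin (2*n+1) := ⟨2*n, by omega⟩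

/-- The index `k ∈ {1,…,2n}` viewed inside `{1,…,2n+1}`. -/
def hIdx {n : ℕ} (k : Fin (2*n)) : Fin (2*n+1) := ⟨k.1, by have := k.2; omega⟩

variable {n : ℕ} {E : Type*} [NormedAddCommGroup E] [NormedSpace ℝ E]

/-- Partial derivative `∂u/∂p_i`. -/
def pd (i : Fin (2*n+1)) (u : Heis n → E) (p : Heis n) : E :=
  fderiv ℝ u p (Pi.single i 1)

/-- The left-invariant vector field `X_j = ∂/∂x_j + 2 y_j ∂/∂t` as a differential operator. -/
def Xop (j : Fin n) (u : Heis n → E) (p : Heis n) : E :=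
  pd (xIdx j) u p + (2 * p (yIdx j)) • pd tIdx u p

/-- The left-invariant vector field `Y_j = ∂/∂y_j - 2 x_j ∂/∂t` as a differential operator. -/
def Yop (j : Fin n) (u : Heis n → E) (p : Heis n) : E :=
  pd (yIdx j) u p - (2 * p (xIdx j)) • pd tIdx u p

/-- The vector field `T = ∂/∂t`. -/
def Tvf (u : Heis n → E) (p : Heis n) : E := pd tIdx u p

/-- `X_k` for `k = 1,…,2n`, where `X_{n+j} = Y_j`. -/
def XYop (k : Fin (2*n)) (u : Heis n → E) (p : Heis n) : E :=
  if h : (k : ℕ) < n then Xop ⟨k.1, h⟩ u p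
  else Yop ⟨k.1 - n, by have := k.2; omega⟩ u p

/-- The right-invariant mirror `X̃_j = X_j - 4 y_j T`. -/
def Xtilde (j : Fin n) (u : Heis n → E) (p : Heis n) : E :=
  Xop j u p - (4 * p (yIdx j)) • Tvf u p

/-- The right-invariant mirror `Ỹ_j = Y_j + 4 x_j T`. -/
def Ytilde (j : Fin n) (u : Heis n → E) (p : Heis n) : E :=
  Yop j u p + (4 * p (xIdx j)) • Tvf u p

/-- The complexified horizontal operator `Z_j = ½(X_j - i Y_j)`. -/
def Zop (j : Fin n) (u : Heis n → ℂ) (p : Heis n) : ℂ :=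
  (1/2 : ℂ) * (Xop j u p - Complex.I * Yop j u p)

/-- The complexified horizontal operator `Z̄_j = ½(X_j + i Y_j)`. -/
def Zbar (j : Fin n) (u : Heis n → ℂ) (p : Heis n) : ℂ :=
  (1/2 : ℂ) * (Xop j u p + Complex.I * Yop j u p)

/-- The operator `L_c = -¼ Σ_j (X_j² + Y_j²) + c T`. -/
def Lop (c : ℝ) (u : Heis n → ℂ) (p : Heis n) : ℂ :=
  -(1/4 : ℂ) * (∑ j : Fin n, (Xop j (Xop j u) p + Yop j (Yop j u) p)) + (c : ℂ) * Tvf u p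

/-- The Heisenberg group law
`(x,y,t)*(x',y',t') = (x+x', y+y', t+t'-2x·y'+2x'·y)`. -/
def hmul (p q : Heis n) : Heis n := fun i =>
  if (i : ℕ) < 2*n then p i + q i
  else p i + q i - 2 * ∑ j : Fin n, p (xIdx j) * q (yIdx j)
    + 2 * ∑ j : Fin n, q (xIdx j) * p (yIdx j)

/-- The point `exp(s X_j) = (s e_j, 0, 0)`. -/
def expX (j : Fin n) (s : ℝ) : Heis n := fun i => if i = xIdx j then s else 0

/-- The point `exp(s Y_j) = (0, s e_j, 0)`. -/
def expY (j : Fin n) (s : ℝ) : Heis n := fun i => if i = yIdx j then s else 0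

/-- The point `exp(s T) = (0, 0, s)`. -/
def expT {n : ℕ} (s : ℝ) : Heis n := fun i => if i = tIdx then s else 0

/-- The standard contact form `α = dt + 2 Σ_k (x_k dy_k - y_k dx_k)` evaluated at the point `p`
on the tangent vector `v`. -/
def alphaForm (p v : Heis n) : ℝ :=
  v tIdx + 2 * ∑ j : Fin n, (p (xIdx j) * v (yIdx j) - p (yIdx j) * v (xIdx j))

/-- `F` is a contact map on `U` with (positive) contact factor `lam`: `F^*α = lam · α`. -/
def IsContact (U : Set (Heis n)) (F : Heis n → Heis n) (lam : Heis n → ℝ) : Prop :=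
  (∀ p ∈ U, 0 < lam p) ∧
  ∀ p ∈ U, ∀ v : Heis n, alphaForm (F p) (fderiv ℝ F p v) = lam p * alphaForm p v

/-- The horizontal differential `D₀F`, the `2n × 2n` matrix with entries `(D₀F)_{m,ℓ} = X_ℓ f_m`. -/
def D0 (F : Heis n → Heis n) (p : Heis n) : Matrix (Fin (2*n)) (Fin (2*n)) ℝ :=
  Matrix.of fun m ℓ => XYop ℓ (fun q => F q (hIdx m)) p

/-- The horizontal Jacobian `J₀F = det D₀F`. -/
def J0 (F : Heis n → Heis n) (p : Heis n) : ℝ := (D0 F p).det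

/-- `F` is conformal on `U` with contact factor `lam`: `F` is contact, `J₀F > 0`, and
`(D₀F)ᵀ (D₀F) = (J₀F)^{1/n} I_{2n}`. -/
def IsConformal (U : Set (Heis n)) (F : Heis n → Heis n) (lam : Heis n → ℝ) : Prop :=
  IsContact U F lam ∧ (∀ p ∈ U, 0 < J0 F p) ∧
  ∀ p ∈ U, (D0 F p)ᵀ * (D0 F p) = (J0 F p ^ (1 / (n : ℝ))) • (1 : Matrix (Fin (2*n)) (Fin (2*n)) ℝ)

/-- The full Jacobian matrix of `F : ℝ^{2n+1} → ℝ^{2n+1}` at `p`. -/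
def fullJac (F : Heis n → Heis n) (p : Heis n) : Matrix (Fin (2*n+1)) (Fin (2*n+1)) ℝ :=
  Matrix.of fun i j => pd j (fun q => F q i) p

end

open ContinuousLinearMap Filter Topology

section Coordinates

variable {n : ℕ}

@[simp] lemma xIdx_inj {j k : Fin n} : xIdx j = xIdx k ↔ j = k := by
  simp [xIdx, Fin.ext_iff]

@[simp] lemma yIdx_inj {j k : Fin n} : yIdx j = yIdx k ↔ j = k := by
  simp [yIdx, Fin.ext_iff]

@[simp] lemma yIdx_ne_xIdx {j k : Fin n} : yIdx j ≠ xIdx k := by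
  simp [xIdx, yIdx, Fin.ext_iff]; omega

@[simp] lemma xIdx_ne_tIdx {j : Fin n} : xIdx j ≠ tIdx := by
  simp [xIdx, tIdx, Fin.ext_iff]; omega

@[simp] lemma yIdx_ne_tIdx {j : Fin n} : yIdx j ≠ tIdx := by
  simp [yIdx, tIdx, Fin.ext_iff]; omega

end Coordinates

section VectorFields

variable {n : ℕ} {E : Type*} [NormedAddCommGroup E] [NormedSpace ℝ E]

def xVec (j : Fin n) (p : Heis n) : Heis n :=
  Pi.single (xIdx j) 1 + (2 * p (yIdx j)) • Pi.single tIdx 1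

def yVec (j : Fin n) (p : Heis n) : Heis n :=
  Pi.single (yIdx j) 1 - (2 * p (xIdx j)) • Pi.single tIdx 1

def yTildeVec (j : Fin n) (p : Heis n) : Heis n :=
  Pi.single (yIdx j) 1 + (2 * p (xIdx j)) • Pi.single tIdx 1

lemma Xop_eq_fderiv (j : Fin n) (u : Heis n → E) (p : Heis n) :
    Xop j u p = fderiv ℝ u p (xVec j p) := by
  simp [Xop, pd, xVec]

lemma Yop_eq_fderiv (j : Fin n) (u : Heis n → E) (p : Heis n) :
    Yop j u p = fderiv ℝ u p (yVec j p) := by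
  simp [Yop, pd, yVec]

lemma Ytilde_eq_fderiv (j : Fin n) (u : Heis n → E) (p : Heis n) :
    Ytilde j u p = fderiv ℝ u p (yTildeVec j p) := by
  simp only [Ytilde, Yop, Tvf, pd, yTildeVec, map_add, map_smul]
  module

end VectorFields

section ContactForm

variable {n : ℕ}

/-- The exterior derivative `dα = 4 Σ_j dx_j ∧ dy_j`, as a bilinear form. -/
noncomputable def dAlpha : Heis n →L[ℝ] Heis n →L[ℝ] ℝ :=
  ∑ j : Fin n, (4 : ℝ) • ((proj (xIdx j)).smulRight (proj (yIdx j) : Heis n →L[ℝ] ℝ) -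
    (proj (yIdx j)).smulRight (proj (xIdx j) : Heis n →L[ℝ] ℝ))

lemma dAlpha_apply (v w : Heis n) :
    dAlpha v w = 4 * ∑ j : Fin n, (v (xIdx j) * w (yIdx j) - v (yIdx j) * w (xIdx j)) := by
  simp [dAlpha, Finset.mul_sum, mul_sub]

lemma dAlpha_swap (v w : Heis n) : dAlpha v w = -dAlpha w v := by
  simp only [dAlpha_apply, ← Finset.sum_neg_distrib, Finset.mul_sum]
  exact Finset.sum_congr rfl fun j _ => by ring

lemma alphaForm_eq (p v : Heis n) : alphaForm p v = v tIdx + dAlpha p v / 2 := by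
  rw [alphaForm, dAlpha_apply]; ring

lemma alphaForm_single_tIdx (p : Heis n) : alphaForm p (Pi.single tIdx 1) = 1 := by
  simp [alphaForm_eq, dAlpha_apply]

lemma alphaForm_xVec (j : Fin n) (p : Heis n) : alphaForm p (xVec j p) = 0 := by
  simp [alphaForm_eq, dAlpha_apply, xVec, Pi.single_apply]; ring

lemma alphaForm_yVec (j : Fin n) (p : Heis n) : alphaForm p (yVec j p) = 0 := by
  simp [alphaForm_eq, dAlpha_apply, yVec, Pi.single_apply]; ring

lemma alphaForm_yTildeVec (j : Fin n) (p : Heis n) :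
    alphaForm p (yTildeVec j p) = 4 * p (xIdx j) := by
  simp [alphaForm_eq, dAlpha_apply, yTildeVec, Pi.single_apply]; ring

lemma dAlpha_yTildeVec_left (j : Fin n) (p w : Heis n) :
    dAlpha (yTildeVec j p) w = -4 * w (xIdx j) := by
  simp [dAlpha_apply, yTildeVec, Pi.single_apply]

lemma dAlpha_xVec_right (j : Fin n) (p v : Heis n) :
    dAlpha v (xVec j p) = -4 * v (yIdx j) := by
  simp [dAlpha_apply, xVec, Pi.single_apply]

lemma dAlpha_yVec_right (j : Fin n) (p v : Heis n) :
    dAlpha v (yVec j p) = 4 * v (xIdx j) := by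
  simp [dAlpha_apply, yVec, Pi.single_apply]

end ContactForm

section Calculus

variable {n : ℕ}

lemma hasFDerivAt_alphaForm {a b : Heis n → Heis n} {a' b' : Heis n →L[ℝ] Heis n} {p : Heis n}
    (ha : HasFDerivAt a a' p) (hb : HasFDerivAt b b' p) :
    HasFDerivAt (fun q => alphaForm (a q) (b q))
      ((proj tIdx).comp b' + (2⁻¹ : ℝ) • (dAlpha.precompR _ (a p) b' + dAlpha.precompL _ a' (b p)))
      p := by
  simp only [alphaForm_eq, div_eq_mul_inv]
  exact ((hasFDerivAt_apply tIdx (b p)).comp p hb).add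
    ((dAlpha.hasFDerivAt_of_bilinear ha hb).mul_const 2⁻¹)

lemma fderiv_apply_fderiv_of_leftInverse {E F : Type*} [NormedAddCommGroup E] [NormedSpace ℝ E]
    [NormedAddCommGroup F] [NormedSpace ℝ F] {f : E → F} {g : F → E} {y : F}
    (hg : DifferentiableAt ℝ g y) (hf : DifferentiableAt ℝ f (g y)) (hfg : ∀ᶠ z in 𝓝 y, f (g z) = z)
    (v : F) : fderiv ℝ f (g y) (fderiv ℝ g y v) = v := by
  have h : HasFDerivAt id ((fderiv ℝ f (g y)).comp (fderiv ℝ g y)) y :=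
    (hf.hasFDerivAt.comp y hg.hasFDerivAt).congr_of_eventuallyEq (hfg.mono fun z hz => hz.symm)
  simpa using congrArg (· v) (h.unique (hasFDerivAt_id y))

end Calculus

section Contact

variable {n : ℕ} {F : Heis n → Heis n} {lam : Heis n → ℝ} {p : Heis n}

def IsContactAt (F : Heis n → Heis n) (lam : Heis n → ℝ) (p : Heis n) : Prop :=
  ∀ᶠ q in 𝓝 p, ∀ v, alphaForm (F q) (fderiv ℝ F q v) = lam q * alphaForm q v

lemma differentiableAt_contactFactor (hF : ContDiffAt ℝ 2 F p)
    (hcontact : IsContactAt F lam p) :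
    DifferentiableAt ℝ lam p := by
  have hD2 : DifferentiableAt ℝ (fderiv ℝ F) p :=
    (hF.fderiv_right (m := 1) le_rfl).differentiableAt one_ne_zero
  have hα := hasFDerivAt_alphaForm (hF.differentiableAt two_ne_zero).hasFDerivAt
    (hD2.hasFDerivAt.clm_apply (hasFDerivAt_const (Pi.single tIdx 1) p))
  refine hα.differentiableAt.congr_of_eventuallyEq ?_
  filter_upwards [hcontact] with q hq
  rw [hq, alphaForm_single_tIdx, mul_one]

theorem dAlpha_fderiv_eq_of_contact (hF : ContDiffAt ℝ 2 F p)
    (hcontact : IsContactAt F lam p)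
    (a b : Heis n) :
    dAlpha (fderiv ℝ F p a) (fderiv ℝ F p b) =
      fderiv ℝ lam p a * alphaForm p b - fderiv ℝ lam p b * alphaForm p a + lam p * dAlpha a b := by
  have hDF := (hF.differentiableAt two_ne_zero).hasFDerivAt
  have hD2 := ((hF.fderiv_right (m := 1) le_rfl).differentiableAt one_ne_zero).hasFDerivAt
  have hlam := (differentiableAt_contactFactor hF hcontact).hasFDerivAt
  -- Differentiating `α(F q)(DF_q b) = lam q · α(q)(b)` along `a`; antisymmetrising in `a, b`
  -- then cancels the second derivative of `F`.
  have key : ∀ a b, alphaForm (F p) (fderiv ℝ (fderiv ℝ F) p a b) +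
      dAlpha (fderiv ℝ F p a) (fderiv ℝ F p b) / 2 =
      fderiv ℝ lam p a * alphaForm p b + lam p * dAlpha a b / 2 := by
    intro a b
    have h1 := hasFDerivAt_alphaForm hDF (hD2.clm_apply (hasFDerivAt_const b p))
    have h2 := hlam.mul (hasFDerivAt_alphaForm (hasFDerivAt_id p) (hasFDerivAt_const b p))
    have := congrArg (· a) (h1.unique (h2.congr_of_eventuallyEq (hcontact.mono fun q hq => hq b)))
    simp only [comp_zero, zero_add, precompR_apply, compL_apply, smul_add, _root_.add_apply,
      ContinuousLinearMap.comp_apply, flip_apply, proj_apply, _root_.smul_apply, smul_eq_mul,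
      precompL_apply, id_eq, id_apply] at this
    rw [alphaForm_eq (F p)]
    linear_combination this
  have hsymm := hF.isSymmSndFDerivAt (by simp) a b
  have hab := key a b
  have hba := key b a
  rw [← hsymm, dAlpha_swap b a, dAlpha_swap (fderiv ℝ F p b)] at hba
  linear_combination hab - hba

theorem dAlpha_eq_fderiv_potential (hF : ContDiffAt ℝ 2 F p)
    (hcontact : IsContactAt F lam p)
    (hlam : lam p ≠ 0) {ℓ : Fin n} {a : Heis n} (ha : fderiv ℝ F p a = yTildeVec ℓ (F p))
    (b : Heis n) (hb : alphaForm p b = 0) :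
    dAlpha a b = -4 * fderiv ℝ (fun q => F q (xIdx ℓ) * (lam q)⁻¹) p b := by
  have hpull := dAlpha_fderiv_eq_of_contact hF hcontact a b
  rw [ha, dAlpha_yTildeVec_left, hb] at hpull
  have hαa : lam p * alphaForm p a = 4 * F p (xIdx ℓ) := by
    rw [← hcontact.self_of_nhds a, ha, alphaForm_yTildeVec]
  have hDF := hF.differentiableAt two_ne_zero
  have hf := (hasFDerivAt_apply (𝕜 := ℝ) (xIdx ℓ) (F p)).comp p hDF.hasFDerivAt
  have hinv := (hasFDerivAt_inv hlam).comp p (differentiableAt_contactFactor hF hcontact).hasFDerivAt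
  have hψ : HasFDerivAt (fun q => F q (xIdx ℓ) * (lam q)⁻¹) _ p := hf.mul hinv
  rw [hψ.fderiv]
  simp only [Function.comp_apply, _root_.add_apply, _root_.smul_apply,
    ContinuousLinearMap.comp_apply, toSpanSingleton_apply, smul_eq_mul, mul_neg, proj_apply, neg_mul]
  field_simp
  linear_combination (-lam p) * hpull + fderiv ℝ lam p b * hαa

end Contact

theorem potential_for_Ytilde_general {n : ℕ}
    (U U' : Set (Heis n)) (hU : IsOpen U) (hU' : IsOpen U')
    (F G : Heis n → Heis n) (lamF : Heis n → ℝ)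
    (hF : ContDiffOn ℝ 2 F U) (hG : ContDiffOn ℝ 2 G U')
    (hbij : Set.BijOn F U U') (hinv : Set.InvOn G F U U')
    (hconf : IsConformal U F lamF) :
    ∀ k ℓ : Fin n, ∀ p ∈ U,
      Ytilde ℓ (fun r => G r (xIdx k)) (F p)
        = -Yop k (fun q => F q (xIdx ℓ) * (lamF q)⁻¹) p ∧
      Ytilde ℓ (fun r => G r (yIdx k)) (F p)
        = Xop k (fun q => F q (xIdx ℓ) * (lamF q)⁻¹) p := by
  obtain ⟨⟨hpos, hcontact⟩, -, -⟩ := hconf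
  intro k ℓ p hp
  have hFp : F p ∈ U' := hbij.mapsTo hp
  have hFC2 : ContDiffAt ℝ 2 F p := hF.contDiffAt (hU.mem_nhds hp)
  have hGd : DifferentiableAt ℝ G (F p) :=
    (hG.contDiffAt (hU'.mem_nhds hFp)).differentiableAt two_ne_zero
  set a := fderiv ℝ G (F p) (yTildeVec ℓ (F p))
  have ha : fderiv ℝ F p a = yTildeVec ℓ (F p) := by
    have hFG : ∀ᶠ z in 𝓝 (F p), F (G z) = z :=
      eventually_of_mem (hU'.mem_nhds hFp) fun z hz => hinv.2 hz
    have := fderiv_apply_fderiv_of_leftInverse hGd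
      (by rw [hinv.1 hp]; exact hFC2.differentiableAt two_ne_zero) hFG (yTildeVec ℓ (F p))
    rwa [hinv.1 hp] at this
  have hlhs : ∀ i, Ytilde ℓ (fun r => G r i) (F p) = a i := by
    intro i
    rw [Ytilde_eq_fderiv, fderiv_apply hGd]
    rfl
  have hpot := dAlpha_eq_fderiv_potential hFC2
    (eventually_of_mem (hU.mem_nhds hp) hcontact : IsContactAt F lamF p) (hpos p hp).ne' ha
  constructor
  · have h := hpot _ (alphaForm_yVec k p)
    rw [dAlpha_yVec_right] at h
    rw [hlhs, Yop_eq_fderiv]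
    linarith
  · have h := hpot _ (alphaForm_xVec k p)
    rw [dAlpha_xVec_right] at h
    rw [hlhs, Xop_eq_fderiv]
    linarith

/-- Let `F : U → U'` be a `C²` conformal diffeomorphism with contact factor
`λ_F` and inverse `G`. Then for all `1 ≤ k,ℓ ≤ n`, on `U`:
`(Ỹ_ℓ g_k) ∘ F = -X_{n+k}(f_ℓ · λ_F⁻¹)` and `(Ỹ_ℓ g_{n+k}) ∘ F = X_k(f_ℓ · λ_F⁻¹)`;
that is, `ψ = -f_ℓ · λ_F⁻¹` is a potential for `Ỹ_ℓ`. -/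
theorem potential_for_Ytilde {n : ℕ}
    (U U' : Set (Heis n)) (hU : IsOpen U) (hU' : IsOpen U')
    (hUconn : IsConnected U) (hU'conn : IsConnected U')
    (F G : Heis n → Heis n) (lamF : Heis n → ℝ)
    (hF : ContDiffOn ℝ 2 F U) (hG : ContDiffOn ℝ 2 G U')
    (hbij : Set.BijOn F U U') (hinv : Set.InvOn G F U U')
    (hconf : IsConformal U F lamF) :
    ∀ k ℓ : Fin n, ∀ p ∈ U,
      Ytilde ℓ (fun r => G r (xIdx k)) (F p)
        = -Yop k (fun q => F q (xIdx ℓ) * (lamF q)⁻¹) p ∧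
      Ytilde ℓ (fun r => G r (yIdx k)) (F p)
        = Xop k (fun q => F q (xIdx ℓ) * (lamF q)⁻¹) p :=
  potential_for_Ytilde_general U U' hU hU' F G lamF hF hG hbij hinv hconf
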